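/- arXiv:1409.7917 — 4 statements merged into one kernel-verified Lean document; each statement's English description precedes it below -/
import Mathlib

section
/- Let u : U → ℝ be a smooth function on U = {(x,y) ∈ ℝ² | x < 0} satisfying (∂u/∂x)² + (∂u/∂y)² = (u/x)² and Δu = 0, with u(x,y) < 0 for all (x,y) ∈ U. If ∂u/∂y ≡ 0 on U, then there exists a ≠ 0 such that u(x,y) = a²·x for all (x,y) ∈ U. -/
noncomputable def pd1 (f : ℝ → ℝ → ℝ) (x y : ℝ) : ℝ := deriv (fun t => f t y) x
noncomputable def pd2 (f : ℝ → ℝ → ℝ) (x y : ℝ) : ℝ := deriv (fun t => f x t) y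

lemma const_on_Iio {f : ℝ → ℝ} (hd : ∀ t ∈ Set.Iio (0:ℝ), DifferentiableAt ℝ f t)
    (h0 : ∀ t ∈ Set.Iio (0:ℝ), deriv f t = 0) {x y : ℝ} (hx : x < 0) (hy : y < 0) :
    f x = f y := by
  have h := (convex_Iio (0:ℝ)).norm_image_sub_le_of_norm_deriv_le (C := 0) hd
    (fun t ht => by rw [h0 t ht]; simp) hx hy
  rw [zero_mul] at h
  have h2 : f y - f x = 0 := norm_le_zero_iff.mp h
  linarith

/-- a solution of the eikonal-harmonic system on
`U = {(x,y) | x < 0}` which is negative and has vanishing `y`-derivative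
must be of the form `u(x,y) = a² x` with `a ≠ 0`. -/
theorem stmt0 (u : ℝ → ℝ → ℝ)
    (hsmooth : ContDiffOn ℝ (⊤ : ℕ∞) (fun p : ℝ × ℝ => u p.1 p.2) {p : ℝ × ℝ | p.1 < 0})
    (heik : ∀ x y : ℝ, x < 0 → (pd1 u x y) ^ 2 + (pd2 u x y) ^ 2 = (u x y / x) ^ 2)
    (hharm : ∀ x y : ℝ, x < 0 → pd1 (pd1 u) x y + pd2 (pd2 u) x y = 0)
    (hneg : ∀ x y : ℝ, x < 0 → u x y < 0)
    (hdy : ∀ x y : ℝ, x < 0 → pd2 u x y = 0) :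
    ∃ a : ℝ, a ≠ 0 ∧ ∀ x y : ℝ, x < 0 → u x y = a ^ 2 * x := by
  classical
  set F : ℝ × ℝ → ℝ := fun p => u p.1 p.2 with hFdef
  have hopen : IsOpen {p : ℝ × ℝ | p.1 < 0} := isOpen_lt continuous_fst continuous_const
  have hCF : ∀ p : ℝ × ℝ, p.1 < 0 → ContDiffAt ℝ (⊤ : ℕ∞) F p := fun p hp =>
    hsmooth.contDiffAt (hopen.mem_nhds hp)
  -- slices
  have hslice1 : ∀ y x : ℝ, x < 0 → ContDiffAt ℝ (⊤ : ℕ∞) (fun t => u t y) x := by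
    intro y x hx
    exact (hCF (x, y) hx).comp x (ContDiffAt.prodMk contDiffAt_id contDiffAt_const)
  have hslice2 : ∀ x : ℝ, x < 0 → ∀ y : ℝ, ContDiffAt ℝ (⊤ : ℕ∞) (fun t => u x t) y := by
    intro x hx y
    exact (hCF (x, y) hx).comp y (ContDiffAt.prodMk contDiffAt_const contDiffAt_id)
  -- u is independent of y
  have hAy : ∀ x, x < 0 → ∀ y, u x y = u x 0 := by
    intro x hx y
    have hdiff : Differentiable ℝ (fun t => u x t) := fun t =>
      (hslice2 x hx t).differentiableAt (by simp)
    exact is_const_of_deriv_eq_zero hdiff (fun t => hdy x t hx) y 0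
  -- second y-derivative vanishes
  have h22 : ∀ x y : ℝ, x < 0 → pd2 (pd2 u) x y = 0 := by
    intro x y hx
    have hz : (fun t => deriv (fun s => u x s) t) = fun _ => (0:ℝ) := by
      funext t
      simpa [pd2] using hdy x t hx
    simp only [pd2]
    rw [hz]
    simp
  have h11 : ∀ x y : ℝ, x < 0 → pd1 (pd1 u) x y = 0 := by
    intro x y hx
    have := hharm x y hx
    have := h22 x y hx
    linarith
  -- pd1 u is independent of y
  have hpd1y : ∀ y t : ℝ, t < 0 → pd1 u t y = pd1 u t 0 := by
    intro y t ht
    have heq : (fun s => u s y) =ᶠ[nhds t] (fun s => u s 0) := by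
      filter_upwards [Iio_mem_nhds ht] with s hs using hAy s hs y
    simpa [pd1] using heq.deriv_eq
  -- pd1 u x y in terms of fderiv
  have hderiv_eq : ∀ y x : ℝ, x < 0 → pd1 u x y = fderiv ℝ F (x, y) (1, 0) := by
    intro y x hx
    have hF' : HasFDerivAt F (fderiv ℝ F (x, y)) (x, y) :=
      ((hCF (x, y) hx).differentiableAt (by simp)).hasFDerivAt
    have hline : HasDerivAt (fun t : ℝ => ((t, y) : ℝ × ℝ)) ((1:ℝ), (0:ℝ)) x :=
      (hasDerivAt_id x).prodMk (hasDerivAt_const x y)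
    have hc := hF'.comp_hasDerivAt x hline
    simpa [pd1, Function.comp_def, hFdef] using hc.deriv
  -- pd1 u (·) 0 is differentiable on Iio 0
  have hGdiff : ∀ t ∈ Set.Iio (0:ℝ), DifferentiableAt ℝ (fun s => pd1 u s 0) t := by
    intro t ht
    have h1 : ContDiffAt ℝ 1 (fderiv ℝ F) (t, 0) :=
      (hCF (t, 0) ht).fderiv_right (by exact WithTop.coe_le_coe.mpr le_top)
    have h2 : DifferentiableAt ℝ (fun s : ℝ => fderiv ℝ F (s, 0)) t :=
      (h1.differentiableAt one_ne_zero).comp t (DifferentiableAt.prodMk differentiableAt_id (differentiableAt_const 0))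
    have h3 : DifferentiableAt ℝ (fun s : ℝ => fderiv ℝ F (s, 0) ((1:ℝ), (0:ℝ))) t :=
      ((ContinuousLinearMap.apply ℝ ℝ ((1:ℝ), (0:ℝ))).differentiableAt).comp t h2
    refine h3.congr_of_eventuallyEq ?_
    filter_upwards [Iio_mem_nhds ht] with s hs using hderiv_eq 0 s hs
  -- pd1 u (·) 0 is constant on Iio 0
  set c : ℝ := pd1 u (-1) 0 with hc
  have hGconst : ∀ t : ℝ, t < 0 → pd1 u t 0 = c := by
    intro t ht
    exact const_on_Iio hGdiff
      (fun s hs => by simpa [pd1] using h11 s 0 hs) ht (by norm_num : (-1:ℝ) < 0)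
  -- u x 0 = c*x + d
  have hf : ∀ x ∈ Set.Iio (0:ℝ), DifferentiableAt ℝ (fun s => u s 0 - c * s) x := by
    intro x hx
    exact ((hslice1 0 x hx).differentiableAt (by simp)).sub ((differentiable_id.const_mul c) x)
  have hfderiv : ∀ x ∈ Set.Iio (0:ℝ), deriv (fun s => u s 0 - c * s) x = 0 := by
    intro x hx
    have hd1 : DifferentiableAt ℝ (fun s => u s 0) x :=
      (hslice1 0 x hx).differentiableAt (by simp)
    have hval : deriv (fun s => u s 0) x = c := by simpa [pd1] using hGconst x hx
    have h1 : HasDerivAt (fun s => u s 0) c x := hval ▸ hd1.hasDerivAt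
    have h2 : HasDerivAt (fun s => c * s) c x := by
      simpa using (hasDerivAt_id x).const_mul c
    simpa [Pi.sub_def] using (h1.sub h2).deriv
  set d : ℝ := u (-1) 0 + c with hd
  have hud : ∀ x : ℝ, x < 0 → u x 0 = c * x + d := by
    intro x hx
    have := const_on_Iio hf hfderiv hx (by norm_num : (-1:ℝ) < 0)
    linarith
  -- eikonal gives d = 0
  have heik' : ∀ x : ℝ, x < 0 → c ^ 2 = ((c * x + d) / x) ^ 2 := by
    intro x hx
    have h := heik x 0 hx
    rw [hdy x 0 hx, hGconst x hx, hud x hx] at h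
    simpa using h
  have hd0 : d = 0 := by
    have h1 := heik' (-1) (by norm_num)
    have h2 := heik' (-2) (by norm_num)
    have e1 : c ^ 2 = (c - d) ^ 2 := by
      rw [h1]; ring_nf
    have e2 : c ^ 2 = (c - d / 2) ^ 2 := by
      rw [h2]; ring_nf
    nlinarith [sq_nonneg d, sq_nonneg c]
  -- c > 0
  have hcpos : 0 < c := by
    have := hneg (-1) 0 (by norm_num)
    have h := hud (-1) (by norm_num)
    rw [hd0] at h
    nlinarith
  refine ⟨Real.sqrt c, by positivity, fun x y hx => ?_⟩
  rw [hAy x hx y, hud x hx, hd0, Real.sq_sqrt hcpos.le]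
  ring
end

section
/- Let u be a smooth solution on ℝ² of the system (∂u/∂x)² + (∂u/∂y)² = λ² and Δu = 0, where λ ∈ ℝ, λ ≠ 0. Then there exist a, b, c ∈ ℝ with a² + b² = λ² such that u(x,y) = a·x + b·y + c for all (x,y) ∈ ℝ². -/
private lemma slice1_hasDeriv {F : ℝ × ℝ → ℝ} (hF : Differentiable ℝ F) (x y : ℝ) :
    HasDerivAt (fun t => F (t, y)) (fderiv ℝ F (x, y) (1, 0)) x :=
  (hF (x, y)).hasFDerivAt.comp_hasDerivAt x (HasDerivAt.prodMk (hasDerivAt_id x) (hasDerivAt_const x y))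

private lemma slice2_hasDeriv {F : ℝ × ℝ → ℝ} (hF : Differentiable ℝ F) (x y : ℝ) :
    HasDerivAt (fun t => F (x, t)) (fderiv ℝ F (x, y) (0, 1)) y :=
  (hF (x, y)).hasFDerivAt.comp_hasDerivAt y (HasDerivAt.prodMk (hasDerivAt_const y x) (hasDerivAt_id y))

/-- a smooth solution on ℝ² of `(∂u/∂x)² + (∂u/∂y)² = λ²`, `Δu = 0`
(with `λ ≠ 0`) is an affine function `u(x,y) = a x + b y + c` with `a² + b² = λ²`. -/
theorem stmt1 (u : ℝ → ℝ → ℝ) (lam : ℝ) (hlam : lam ≠ 0)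
    (hsmooth : ContDiff ℝ (⊤ : ℕ∞) (fun p : ℝ × ℝ => u p.1 p.2))
    (heik : ∀ x y : ℝ, (pd1 u x y) ^ 2 + (pd2 u x y) ^ 2 = lam ^ 2)
    (hharm : ∀ x y : ℝ, pd1 (pd1 u) x y + pd2 (pd2 u) x y = 0) :
    ∃ a b c : ℝ, a ^ 2 + b ^ 2 = lam ^ 2 ∧ ∀ x y : ℝ, u x y = a * x + b * y + c := by
  set F : ℝ × ℝ → ℝ := fun p => u p.1 p.2 with hFdef
  have hFd : Differentiable ℝ F := hsmooth.differentiable (by simp)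
  have hF' : ContDiff ℝ (⊤ : ℕ∞) (fderiv ℝ F) := hsmooth.fderiv_right (by simp)
  have hF'd : Differentiable ℝ (fderiv ℝ F) := hF'.differentiable (by simp)
  -- first partials
  have h1 : ∀ x y, pd1 u x y = fderiv ℝ F (x, y) (1, 0) := fun x y =>
    (slice1_hasDeriv hFd x y).deriv
  have h2 : ∀ x y, pd2 u x y = fderiv ℝ F (x, y) (0, 1) := fun x y =>
    (slice2_hasDeriv hFd x y).deriv
  -- the functions p ↦ fderiv F p v are smooth
  have hGd : ∀ v : ℝ × ℝ, Differentiable ℝ (fun p => fderiv ℝ F p v) := fun v =>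
    ((hF'.clm_apply contDiff_const).differentiable (by simp))
  -- fderiv of p ↦ fderiv F p v
  have key : ∀ (v q w : ℝ × ℝ), fderiv ℝ (fun p => fderiv ℝ F p v) q w
      = fderiv ℝ (fderiv ℝ F) q w v := by
    intro v q w
    have hc : HasFDerivAt (fun p => fderiv ℝ F p v)
        ((ContinuousLinearMap.apply ℝ ℝ v).comp (fderiv ℝ (fderiv ℝ F) q)) q :=
      (ContinuousLinearMap.apply ℝ ℝ v).hasFDerivAt.comp q (hF'd q).hasFDerivAt
    rw [hc.fderiv]; rfl
  have hsymm : ∀ (q v w : ℝ × ℝ), fderiv ℝ (fderiv ℝ F) q v w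
      = fderiv ℝ (fderiv ℝ F) q w v := fun q v w =>
    second_derivative_symmetric (fun y => (hFd y).hasFDerivAt) (hF'd q).hasFDerivAt v w
  -- second partials as hasDerivAt
  have hA1 : ∀ x y, HasDerivAt (fun t => pd1 u t y) (pd1 (pd1 u) x y) x := by
    intro x y
    have he : (fun t => pd1 u t y) = fun t => fderiv ℝ F (t, y) (1, 0) :=
      funext fun t => h1 t y
    have := slice1_hasDeriv (hGd (1, 0)) x y
    rw [pd1, he]
    exact this.deriv ▸ this
  have hA2 : ∀ x y, HasDerivAt (fun s => pd1 u x s) (pd2 (pd1 u) x y) y := by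
    intro x y
    have he : (fun s => pd1 u x s) = fun s => fderiv ℝ F (x, s) (1, 0) :=
      funext fun s => h1 x s
    have := slice2_hasDeriv (hGd (1, 0)) x y
    rw [pd2, he]
    exact this.deriv ▸ this
  have hB1 : ∀ x y, HasDerivAt (fun t => pd2 u t y) (pd1 (pd2 u) x y) x := by
    intro x y
    have he : (fun t => pd2 u t y) = fun t => fderiv ℝ F (t, y) (0, 1) :=
      funext fun t => h2 t y
    have := slice1_hasDeriv (hGd (0, 1)) x y
    rw [pd1, he]
    exact this.deriv ▸ this
  have hB2 : ∀ x y, HasDerivAt (fun s => pd2 u x s) (pd2 (pd2 u) x y) y := by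
    intro x y
    have he : (fun s => pd2 u x s) = fun s => fderiv ℝ F (x, s) (0, 1) :=
      funext fun s => h2 x s
    have := slice2_hasDeriv (hGd (0, 1)) x y
    rw [pd2, he]
    exact this.deriv ▸ this
  -- values of second partials
  have e11 : ∀ x y, pd1 (pd1 u) x y = fderiv ℝ (fderiv ℝ F) (x, y) (1, 0) (1, 0) := by
    intro x y
    have he : (fun t => pd1 u t y) = fun t => fderiv ℝ F (t, y) (1, 0) :=
      funext fun t => h1 t y
    rw [pd1, he, (slice1_hasDeriv (hGd (1, 0)) x y).deriv, key]
  have e12 : ∀ x y, pd2 (pd1 u) x y = fderiv ℝ (fderiv ℝ F) (x, y) (0, 1) (1, 0) := by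
    intro x y
    have he : (fun s => pd1 u x s) = fun s => fderiv ℝ F (x, s) (1, 0) :=
      funext fun s => h1 x s
    rw [pd2, he, (slice2_hasDeriv (hGd (1, 0)) x y).deriv, key]
  have e21 : ∀ x y, pd1 (pd2 u) x y = fderiv ℝ (fderiv ℝ F) (x, y) (1, 0) (0, 1) := by
    intro x y
    have he : (fun t => pd2 u t y) = fun t => fderiv ℝ F (t, y) (0, 1) :=
      funext fun t => h2 t y
    rw [pd1, he, (slice1_hasDeriv (hGd (0, 1)) x y).deriv, key]
  have e22 : ∀ x y, pd2 (pd2 u) x y = fderiv ℝ (fderiv ℝ F) (x, y) (0, 1) (0, 1) := by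
    intro x y
    have he : (fun s => pd2 u x s) = fun s => fderiv ℝ F (x, s) (0, 1) :=
      funext fun s => h2 x s
    rw [pd2, he, (slice2_hasDeriv (hGd (0, 1)) x y).deriv, key]
  have hmix : ∀ x y, pd2 (pd1 u) x y = pd1 (pd2 u) x y := by
    intro x y; rw [e12, e21, hsymm]
  -- differentiate the eikonal equation in x and y
  have hx0 : ∀ x y, pd1 u x y * pd1 (pd1 u) x y + pd2 u x y * pd1 (pd2 u) x y = 0 := by
    intro x y
    have hd : HasDerivAt (fun t => pd1 u t y ^ 2 + pd2 u t y ^ 2)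
        (2 * pd1 u x y ^ 1 * pd1 (pd1 u) x y + 2 * pd2 u x y ^ 1 * pd1 (pd2 u) x y) x :=
      ((hA1 x y).pow 2).add ((hB1 x y).pow 2)
    have hc : (fun t => pd1 u t y ^ 2 + pd2 u t y ^ 2) = fun _ => lam ^ 2 :=
      funext fun t => heik t y
    have := hd.deriv
    rw [hc, deriv_const] at this
    nlinarith [this]
  have hy0 : ∀ x y, pd1 u x y * pd2 (pd1 u) x y + pd2 u x y * pd2 (pd2 u) x y = 0 := by
    intro x y
    have hd : HasDerivAt (fun s => pd1 u x s ^ 2 + pd2 u x s ^ 2)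
        (2 * pd1 u x y ^ 1 * pd2 (pd1 u) x y + 2 * pd2 u x y ^ 1 * pd2 (pd2 u) x y) y :=
      ((hA2 x y).pow 2).add ((hB2 x y).pow 2)
    have hc : (fun s => pd1 u x s ^ 2 + pd2 u x s ^ 2) = fun _ => lam ^ 2 :=
      funext fun s => heik x s
    have := hd.deriv
    rw [hc, deriv_const] at this
    nlinarith [this]
  -- all second partials vanish
  have hlam2 : lam ^ 2 ≠ 0 := pow_ne_zero 2 hlam
  have hzero : ∀ x y, pd1 (pd1 u) x y = 0 ∧ pd2 (pd1 u) x y = 0 ∧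
      pd1 (pd2 u) x y = 0 ∧ pd2 (pd2 u) x y = 0 := by
    intro x y
    have hA := hx0 x y
    have hB := hy0 x y
    have hh := hharm x y
    have hm := hmix x y
    have he := heik x y
    have hr : pd1 (pd1 u) x y = 0 := by
      have h0 : pd1 (pd1 u) x y * lam ^ 2 = 0 := by
        rw [← he]
        linear_combination pd1 u x y * hA - pd2 u x y * hB +
          pd1 u x y * pd2 u x y * hm + pd2 u x y ^ 2 * hh
      exact (mul_eq_zero.mp h0).resolve_right hlam2
    have hs : pd2 (pd1 u) x y = 0 := by
      have h0 : pd2 (pd1 u) x y * lam ^ 2 = 0 := by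
        rw [← he]
        linear_combination pd1 u x y * hB + pd2 u x y * hA -
          pd1 u x y * pd2 u x y * hh + pd2 u x y ^ 2 * hm
      exact (mul_eq_zero.mp h0).resolve_right hlam2
    exact ⟨hr, hs, by rw [← hm]; exact hs, by linarith⟩
  -- first partials are constant
  set a := pd1 u 0 0 with ha
  set b := pd2 u 0 0 with hb
  have hpa : ∀ x y, pd1 u x y = a := by
    intro x y
    have c1 : pd1 u x y = pd1 u 0 y :=
      is_const_of_deriv_eq_zero (fun t => (hA1 t y).differentiableAt)
        (fun t => by rw [(hA1 t y).deriv]; exact (hzero t y).1) x 0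
    have c2 : pd1 u 0 y = pd1 u 0 0 :=
      is_const_of_deriv_eq_zero (fun s => (hA2 0 s).differentiableAt)
        (fun s => by rw [(hA2 0 s).deriv]; exact (hzero 0 s).2.1) y 0
    rw [c1, c2]
  have hpb : ∀ x y, pd2 u x y = b := by
    intro x y
    have c1 : pd2 u x y = pd2 u 0 y :=
      is_const_of_deriv_eq_zero (fun t => (hB1 t y).differentiableAt)
        (fun t => by rw [(hB1 t y).deriv]; exact (hzero t y).2.2.1) x 0
    have c2 : pd2 u 0 y = pd2 u 0 0 :=
      is_const_of_deriv_eq_zero (fun s => (hB2 0 s).differentiableAt)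
        (fun s => by rw [(hB2 0 s).deriv]; exact (hzero 0 s).2.2.2) y 0
    rw [c1, c2]
  refine ⟨a, b, u 0 0, by rw [ha, hb]; exact heik 0 0, ?_⟩
  intro x y
  -- u slices
  have hu1 : ∀ x y, HasDerivAt (fun t => u t y) (pd1 u x y) x := by
    intro x y
    have := slice1_hasDeriv hFd x y
    rw [← h1 x y] at this
    exact this
  have hu2 : ∀ x y, HasDerivAt (fun s => u x s) (pd2 u x y) y := by
    intro x y
    have := slice2_hasDeriv hFd x y
    rw [← h2 x y] at this
    exact this
  have step1 : u x y - a * x = u 0 y - a * 0 :=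
    is_const_of_deriv_eq_zero (f := fun t => u t y - a * t)
      (fun t => ((hu1 t y).sub ((hasDerivAt_id t).const_mul a)).differentiableAt)
      (fun t => by
        have hD : HasDerivAt (fun t => u t y - a * t) (pd1 u t y - a * 1) t :=
          (hu1 t y).sub ((hasDerivAt_id t).const_mul a)
        rw [hD.deriv, hpa t y]; ring) x 0
  have step2 : u 0 y - b * y = u 0 0 - b * 0 :=
    is_const_of_deriv_eq_zero (f := fun s => u 0 s - b * s)
      (fun s => ((hu2 0 s).sub ((hasDerivAt_id s).const_mul b)).differentiableAt)
      (fun s => by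
        have hD : HasDerivAt (fun s => u 0 s - b * s) (pd2 u 0 s - b * 1) s :=
          (hu2 0 s).sub ((hasDerivAt_id s).const_mul b)
        rw [hD.deriv, hpb 0 s]; ring) y 0
  simp only [mul_zero, sub_zero] at step1 step2
  linarith [step1, step2]
end

section
/- For each a ≠ 0 and b ∈ ℝ, the function u(x,y) = a²x/((y+b)² + x²) on U = {(x,y) | x < 0} satisfies (∂u/∂x)² + (∂u/∂y)² = (u/x)² and Δu = 0, and u(x,y) < 0 for all (x,y) ∈ U. -/
/-!
Writing `z = x + iy`, the function `k * x / (y ^ 2 + x ^ 2)` is `k * Re (1 / z)`, the real part of a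
holomorphic function on `z ≠ 0`; hence it is harmonic and its gradient has length
`|k / z ^ 2| = |k| / (x ^ 2 + y ^ 2)`, which is `|u / x|`. The shift `y ↦ y + b` commutes with both
partial derivatives, so everything reduces to `b = 0`, where the identities are checked by computing
the partial derivatives explicitly.
-/

section Shift

variable (f : ℝ → ℝ → ℝ) (b : ℝ)

theorem pd1_comp_add_const : pd1 (fun x y => f x (y + b)) = fun x y => pd1 f x (y + b) := rfl

theorem pd2_comp_add_const : pd2 (fun x y => f x (y + b)) = fun x y => pd2 f x (y + b) := by
  funext x y
  exact deriv_comp_add_const (f := f x) (a := b) (x := y)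

end Shift

open Topology

theorem sq_add_sq_pos (y : ℝ) {x : ℝ} (hx : x ≠ 0) : 0 < y ^ 2 + x ^ 2 :=
  add_pos_of_nonneg_of_pos (sq_nonneg y) (sq_pos_of_ne_zero hx)

noncomputable def reRecip (k x y : ℝ) : ℝ := k * x / (y ^ 2 + x ^ 2)

namespace reRecip

variable (k : ℝ) {x y : ℝ}

theorem hasDerivAt_fst (h : y ^ 2 + x ^ 2 ≠ 0) :
    HasDerivAt (fun t => reRecip k t y) (k * (y ^ 2 - x ^ 2) / (y ^ 2 + x ^ 2) ^ 2) x := by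
  have hnum : HasDerivAt (fun t : ℝ => k * t) k x := by
    simpa using (hasDerivAt_id x).const_mul k
  have hden : HasDerivAt (fun t : ℝ => y ^ 2 + t ^ 2) (2 * x) x := by
    simpa using (hasDerivAt_pow 2 x).const_add (y ^ 2)
  refine (hnum.div hden h).congr_deriv ?_
  field_simp
  ring

theorem hasDerivAt_snd (h : y ^ 2 + x ^ 2 ≠ 0) :
    HasDerivAt (fun t => reRecip k x t) (-(2 * k * x * y) / (y ^ 2 + x ^ 2) ^ 2) y := by
  have hden : HasDerivAt (fun t : ℝ => t ^ 2 + x ^ 2) (2 * y) y := by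
    simpa using (hasDerivAt_pow 2 y).add_const (x ^ 2)
  refine ((hasDerivAt_const y (k * x)).div hden h).congr_deriv ?_
  field_simp
  ring

theorem pd1_eq (h : y ^ 2 + x ^ 2 ≠ 0) :
    pd1 (reRecip k) x y = k * (y ^ 2 - x ^ 2) / (y ^ 2 + x ^ 2) ^ 2 :=
  (hasDerivAt_fst k h).deriv

theorem pd2_eq (h : y ^ 2 + x ^ 2 ≠ 0) :
    pd2 (reRecip k) x y = -(2 * k * x * y) / (y ^ 2 + x ^ 2) ^ 2 :=
  (hasDerivAt_snd k h).deriv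

theorem pd1_pd1_eq (h : y ^ 2 + x ^ 2 ≠ 0) :
    pd1 (pd1 (reRecip k)) x y = k * (2 * x ^ 3 - 6 * y ^ 2 * x) / (y ^ 2 + x ^ 2) ^ 3 := by
  have hnear : ∀ᶠ t in 𝓝 x, y ^ 2 + t ^ 2 ≠ 0 :=
    (continuous_const.add (continuous_pow 2)).continuousAt.eventually_ne h
  have hpd1 : (fun t => pd1 (reRecip k) t y) =ᶠ[𝓝 x]
      fun t => k * (y ^ 2 - t ^ 2) / (y ^ 2 + t ^ 2) ^ 2 :=
    hnear.mono fun t ht => pd1_eq k ht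
  have hnum : HasDerivAt (fun t : ℝ => k * (y ^ 2 - t ^ 2)) (k * -(2 * x)) x := by
    simpa using ((hasDerivAt_pow 2 x).const_sub (y ^ 2)).const_mul k
  have hden : HasDerivAt (fun t : ℝ => (y ^ 2 + t ^ 2) ^ 2) (2 * (y ^ 2 + x ^ 2) * (2 * x)) x := by
    simpa using ((hasDerivAt_pow 2 x).const_add (y ^ 2)).fun_pow 2
  rw [pd1, hpd1.deriv_eq]
  refine (hnum.div hden (pow_ne_zero 2 h)).deriv.trans ?_
  field_simp
  ring

theorem pd2_pd2_eq (h : y ^ 2 + x ^ 2 ≠ 0) :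
    pd2 (pd2 (reRecip k)) x y = k * (6 * y ^ 2 * x - 2 * x ^ 3) / (y ^ 2 + x ^ 2) ^ 3 := by
  have hnear : ∀ᶠ t in 𝓝 y, t ^ 2 + x ^ 2 ≠ 0 :=
    ((continuous_pow 2).add continuous_const).continuousAt.eventually_ne h
  have hpd2 : (fun t => pd2 (reRecip k) x t) =ᶠ[𝓝 y]
      fun t => -(2 * k * x * t) / (t ^ 2 + x ^ 2) ^ 2 :=
    hnear.mono fun t ht => pd2_eq k ht
  have hnum : HasDerivAt (fun t : ℝ => -(2 * k * x * t)) (-(2 * k * x)) y := by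
    simpa using ((hasDerivAt_id' y).const_mul (2 * k * x)).fun_neg
  have hden : HasDerivAt (fun t : ℝ => (t ^ 2 + x ^ 2) ^ 2) (2 * (y ^ 2 + x ^ 2) * (2 * y)) y := by
    simpa using ((hasDerivAt_pow 2 y).add_const (x ^ 2)).fun_pow 2
  rw [pd2, hpd2.deriv_eq]
  refine (hnum.div hden (pow_ne_zero 2 h)).deriv.trans ?_
  field_simp
  ring

theorem laplacian_eq_zero (h : y ^ 2 + x ^ 2 ≠ 0) :
    pd1 (pd1 (reRecip k)) x y + pd2 (pd2 (reRecip k)) x y = 0 := by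
  rw [pd1_pd1_eq k h, pd2_pd2_eq k h]
  ring

theorem pd1_sq_add_pd2_sq (hx : x ≠ 0) :
    pd1 (reRecip k) x y ^ 2 + pd2 (reRecip k) x y ^ 2 = (reRecip k x y / x) ^ 2 := by
  have h : y ^ 2 + x ^ 2 ≠ 0 := (sq_add_sq_pos y hx).ne'
  rw [pd1_eq k h, pd2_eq k h, reRecip]
  field_simp
  ring

theorem neg_of_pos_of_neg (hk : 0 < k) (hx : x < 0) : reRecip k x y < 0 :=
  div_neg_of_neg_of_pos (mul_neg_of_pos_of_neg hk hx) (sq_add_sq_pos y hx.ne)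

end reRecip

/-- for `a ≠ 0` and `b ∈ ℝ`, the function
`u(x,y) = a² x /((y+b)² + x²)` on `U = {(x,y) | x < 0}` satisfies
`(∂u/∂x)² + (∂u/∂y)² = (u/x)²`, `Δu = 0` and `u < 0`. -/
theorem stmt3 (a b : ℝ) (ha : a ≠ 0) :
    ∀ x y : ℝ, x < 0 →
      (pd1 (fun x y => a ^ 2 * x / ((y + b) ^ 2 + x ^ 2)) x y) ^ 2 +
          (pd2 (fun x y => a ^ 2 * x / ((y + b) ^ 2 + x ^ 2)) x y) ^ 2 =
        ((a ^ 2 * x / ((y + b) ^ 2 + x ^ 2)) / x) ^ 2 ∧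
      pd1 (pd1 (fun x y => a ^ 2 * x / ((y + b) ^ 2 + x ^ 2))) x y +
          pd2 (pd2 (fun x y => a ^ 2 * x / ((y + b) ^ 2 + x ^ 2))) x y = 0 ∧
      a ^ 2 * x / ((y + b) ^ 2 + x ^ 2) < 0 := by
  intro x y hx
  have hu : (fun x y => a ^ 2 * x / ((y + b) ^ 2 + x ^ 2)) =
      fun x y => reRecip (a ^ 2) x (y + b) := rfl
  simp only [hu, pd1_comp_add_const, pd2_comp_add_const]
  have hD : (y + b) ^ 2 + x ^ 2 ≠ 0 := (sq_add_sq_pos (y + b) hx.ne).ne'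
  exact ⟨reRecip.pd1_sq_add_pd2_sq _ hx.ne, reRecip.laplacian_eq_zero _ hD,
    reRecip.neg_of_pos_of_neg _ (by positivity) hx⟩
end

section
/- With the abelian subalgebra a = span{F,Q,R} ⊂ g^J identified with polynomials of degree ≤ 2, and B ⊂ G^J(ℝ) the Borel subgroup of upper-triangular elements: if g₁, g₂ ∈ G^J(ℝ) and k₁, k₂ ∈ a satisfy Ad(g₁)k₁ = Ad(g₂)k₂, then k₁ and k₂ have the same image as functions ℝ → ℝ (Im(k₁) = Im(k₂)). -/
open Matrix

abbrev M2 := Matrix (Fin 2) (Fin 2) ℝ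
abbrev GJalg := M2 × (Fin 2 → ℝ) × ℝ

/-- Standard symplectic form on ℝ². -/
def Om (ξ η : Fin 2 → ℝ) : ℝ := ξ 0 * η 1 - ξ 1 * η 0

/-- The adjoint representation of the Jacobi group:
`Ad(M,X,κ)·(A,ξ,r) = (MAM⁻¹, XAM⁻¹ + ξM⁻¹, r − 2Ω(ξ,X) − Ω(XA,X))`. -/
noncomputable def AdJ (M : M2) (X : Fin 2 → ℝ) (κ : ℝ) (L : GJalg) : GJalg :=
  (M * L.1 * M⁻¹,
   Matrix.vecMul X (L.1 * M⁻¹) + Matrix.vecMul L.2.1 M⁻¹,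
   L.2.2 - 2 * Om L.2.1 X - Om (Matrix.vecMul X L.1) X)

/-- The element of `a = span{F,Q,R}` corresponding to the polynomial
`k(x) = α x² + β x + γ` via `F ↦ −x²`, `Q ↦ x`, `R ↦ −¼`. -/
noncomputable def toA (α β γ : ℝ) : GJalg := (!![0, -α; 0, 0], ![0, β], -4 * γ)

/-!
Let `v` be the first column of `M` (nonzero since `det M = 1`) and `t = -X₀/2`. Computing
`Ad(M, X, κ) k` shows that it determines the numbers `α vᵢ²`, `k'(t) vᵢ` and `k(t)`. If
`Ad(g₁)k₁ = Ad(g₂)k₂`, comparing them at a coordinate where `v₁` is nonzero gives `s ≠ 0` with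
`k₁(x + t₁) = k₂(s x + t₂)` for all `x`, and an affine change of variable does not change the image.
-/

lemma Matrix.col_ne_zero_of_det_ne_zero {n R : Type*} [Fintype n] [DecidableEq n] [CommRing R]
    {A : Matrix n n R} (hA : A.det ≠ 0) (j : n) : (fun i => A i j) ≠ 0 :=
  fun h => hA (det_eq_zero_of_column_eq_zero j fun i => congrFun h i)

lemma Matrix.inv_fin_two_of_det_eq_one {R : Type*} [CommRing R] {M : Matrix (Fin 2) (Fin 2) R}
    (hM : M.det = 1) :
    M⁻¹ = !![M 1 1, -M 0 1; -M 1 0, M 0 0] := by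
  rw [inv_def, hM, adjugate_fin_two]
  simp

lemma AdJ_toA {M : M2} (hM : M.det = 1) (X : Fin 2 → ℝ) (κ α β γ : ℝ) :
    AdJ M X κ (toA α β γ) =
      (!![α * M 0 0 * M 1 0, -(α * M 0 0 ^ 2); α * M 1 0 ^ 2, -(α * M 0 0 * M 1 0)],
        ![-((β - α * X 0) * M 1 0), (β - α * X 0) * M 0 0],
        -4 * (α * (X 0 / 2) ^ 2 - β * (X 0 / 2) + γ)) := by
  rw [AdJ, toA, Matrix.inv_fin_two_of_det_eq_one hM]
  refine Prod.ext ?_ (Prod.ext ?_ ?_)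
  · ext i j
    fin_cases i <;> fin_cases j <;>
      simp only [mul_apply, Fin.sum_univ_two, of_apply, cons_val', cons_val_zero, cons_val_one,
        empty_val', cons_val_fin_one, Fin.zero_eta, Fin.mk_one] <;> ring
  · ext i
    fin_cases i <;>
      simp only [Fin.isValue, cons_mul, vecMul_cons, vecHead, cons_val_zero, cons_val_one, zero_smul,
        tail_cons, cons_val_fin_one, neg_smul, smul_cons, smul_eq_mul, mul_neg, smul_empty, neg_cons,
        neg_neg, neg_empty, empty_vecMul, add_zero, zero_add, empty_mul, Equiv.symm_apply_apply,
        smul_zero, Fin.zero_eta, Fin.mk_one, Pi.add_apply] <;> ring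
  · simp only [Om, Fin.isValue, cons_val_zero, cons_val_one, cons_val_fin_one, vecMul_cons, vecHead,
      smul_cons, smul_eq_mul, mul_zero, smul_empty, empty_vecMul, add_zero, Pi.add_apply]
    ring

/-- Comparing the coordinate `i` with `v i ≠ 0` gives `s = w i / v i`; if `w i = 0` then
`α₁ = u₁ = 0`, which in turn forces `α₂ = u₂ = 0`. -/
lemma exists_scale_of_sq_mul_eq {ι K : Type*} [Field K] {v w : ι → K} (hv : v ≠ 0) (hw : w ≠ 0)
    {α₁ α₂ u₁ u₂ : K} (hα : ∀ i, α₁ * v i ^ 2 = α₂ * w i ^ 2) (hu : ∀ i, u₁ * v i = u₂ * w i) :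
    ∃ s ≠ 0, α₁ = α₂ * s ^ 2 ∧ u₁ = u₂ * s := by
  obtain ⟨i, hi⟩ : ∃ i, v i ≠ 0 := Function.ne_iff.1 hv
  by_cases hwi : w i = 0
  · obtain ⟨j, hj⟩ : ∃ j, w j ≠ 0 := Function.ne_iff.1 hw
    have hα₁ : α₁ = 0 := by simpa [hwi, hi] using hα i
    have hu₁ : u₁ = 0 := by simpa [hwi, hi] using hu i
    have hα₂ : α₂ = 0 := by simpa [hα₁, hj] using (hα j).symm
    have hu₂ : u₂ = 0 := by simpa [hu₁, hj] using (hu j).symm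
    exact ⟨1, one_ne_zero, by simp [hα₁, hα₂], by simp [hu₁, hu₂]⟩
  · refine ⟨w i / v i, div_ne_zero hwi hi, ?_, ?_⟩
    · field_simp
      linear_combination hα i
    · field_simp
      linear_combination hu i

lemma range_quadratic_eq_of_affine {K : Type*} [Field K] {α β γ α' β' γ' : K} (s t : K)
    (hs : s ≠ 0) (hα : α' = α * s ^ 2) (hβ : β' = s * (β + 2 * α * t))
    (hγ : γ' = α * t ^ 2 + β * t + γ) :
    Set.range (fun x : K => α' * x ^ 2 + β' * x + γ') =
      Set.range (fun x : K => α * x ^ 2 + β * x + γ) := by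
  have hsurj : Function.Surjective fun x : K => s * x + t := fun y =>
    ⟨(y - t) / s, by field_simp; ring⟩
  rw [← hsurj.range_comp fun x => α * x ^ 2 + β * x + γ]
  congr 1
  ext x
  simp only [Function.comp_apply, hα, hβ, hγ]
  ring

/-- if `Ad(g₁)k₁ = Ad(g₂)k₂` with `g₁, g₂` in the Jacobi group and
`k₁, k₂ ∈ a` (polynomials of degree ≤ 2), then `Im(k₁) = Im(k₂)`. -/
theorem stmt13 (M₁ M₂ : M2) (hM₁ : M₁.det = 1) (hM₂ : M₂.det = 1)
    (X₁ X₂ : Fin 2 → ℝ) (κ₁ κ₂ : ℝ) (α₁ β₁ γ₁ α₂ β₂ γ₂ : ℝ)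
    (h : AdJ M₁ X₁ κ₁ (toA α₁ β₁ γ₁) = AdJ M₂ X₂ κ₂ (toA α₂ β₂ γ₂)) :
    Set.range (fun x : ℝ => α₁ * x ^ 2 + β₁ * x + γ₁) =
      Set.range (fun x : ℝ => α₂ * x ^ 2 + β₂ * x + γ₂) := by
  rw [AdJ_toA hM₁, AdJ_toA hM₂] at h
  simp only [Prod.mk.injEq] at h
  obtain ⟨hA, hξ, hr⟩ := h
  have hα : ∀ i, α₁ * M₁ i 0 ^ 2 = α₂ * M₂ i 0 ^ 2 := Fin.forall_fin_two.2
    ⟨by simpa using congrFun (congrFun hA 0) 1, by simpa using congrFun (congrFun hA 1) 0⟩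
  have hu : ∀ i, (β₁ - α₁ * X₁ 0) * M₁ i 0 = (β₂ - α₂ * X₂ 0) * M₂ i 0 := Fin.forall_fin_two.2
    ⟨by simpa using congrFun hξ 1, by simpa using congrFun hξ 0⟩
  obtain ⟨s, hs, hαs, hus⟩ := exists_scale_of_sq_mul_eq
    (col_ne_zero_of_det_ne_zero (hM₁ ▸ one_ne_zero) 0)
    (col_ne_zero_of_det_ne_zero (hM₂ ▸ one_ne_zero) 0) hα hu
  calc Set.range (fun x : ℝ => α₁ * x ^ 2 + β₁ * x + γ₁)
      = Set.range (fun x : ℝ => α₁ * x ^ 2 + (β₁ - α₁ * X₁ 0) * x +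
          (α₁ * (-X₁ 0 / 2) ^ 2 + β₁ * (-X₁ 0 / 2) + γ₁)) :=
        (range_quadratic_eq_of_affine 1 (-X₁ 0 / 2) one_ne_zero (by ring) (by ring) rfl).symm
    _ = Set.range (fun x : ℝ => α₂ * x ^ 2 + β₂ * x + γ₂) :=
        range_quadratic_eq_of_affine s (-X₂ 0 / 2) hs hαs (by rw [hus]; ring)
          (by linear_combination -hr / 4)
end
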